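/- Each player's hand changes at most 8 times during the infinite alternating sequence of Shape Up and Ship Out rounds; in particular every player's hand is eventually constant (stabilizes). -/
import Mathlib


open Finset

variable {A B : Type*}

/-- The spots of a hand holding a spade (suit `3`). -/
def spadeSpots (h : Fin 4 → B × Fin 4) : Finset (Fin 4) :=
  Finset.univ.filter (fun i => (h i).2 = 3)

/-- Shape Up: swap spot `0` with the least spot holding a spade, if any. -/
def shapeUp (h : Fin 4 → B × Fin 4) : Fin 4 → B × Fin 4 :=
  if hs : (spadeSpots h).Nonempty then h ∘ (Equiv.swap 0 ((spadeSpots h).min' hs)) else h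

/-- Bad spades: spades lying in a spot other than the leftmost spot `0`. -/
def badSpades (h : Fin 4 → B × Fin 4) : Finset (Fin 4) :=
  Finset.univ.filter (fun i => i ≠ 0 ∧ (h i).2 = 3)

/-- The spot of the leftmost bad spade (junk value `0` if there is none). -/
def leftBad (h : Fin 4 → B × Fin 4) : Fin 4 :=
  if hb : (badSpades h).Nonempty then (badSpades h).min' hb else 0

/-- The card a player with a bad spade calls for: its name is the name of the hand
(the name of the leftmost spade, in spot `0`), and its suit is the suit `3 - i`
named by the spot `i` of the leftmost bad spade. -/
def request (h : Fin 4 → B × Fin 4) : B × Fin 4 :=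
  ((h 0).1, 3 - leftBad h)

/-- Ship Out, seen from one hand: replace the leftmost bad spade by the requested card. -/
def shipOutHand (h : Fin 4 → B × Fin 4) : Fin 4 → B × Fin 4 :=
  if (badSpades h).Nonempty then Function.update h (leftBad h) (request h) else h

/-- The hand of player `a` under the global assignment `f`. -/
def hand (f : A × Fin 4 → B × Fin 4) (a : A) : Fin 4 → B × Fin 4 :=
  fun i => f (a, i)

/-- The global Shape Up round: every player shapes up simultaneously. -/
def gShapeUp (f : A × Fin 4 → B × Fin 4) : A × Fin 4 → B × Fin 4 :=
  fun p => shapeUp (hand f p.1) p.2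

/-- A player is active in the Ship Out round if her hand is named
(spade in spot `0`) and contains a bad spade. -/
def isActive (f : A × Fin 4 → B × Fin 4) (a : A) : Prop :=
  (f (a, 0)).2 = 3 ∧ (badSpades (hand f a)).Nonempty

open Classical in
/-- The global Ship Out round: every active player swaps her leftmost bad spade
with the card she calls for, wherever that card is. -/
noncomputable def gShipOut (f : A × Fin 4 → B × Fin 4) : A × Fin 4 → B × Fin 4 :=
  fun p =>
    if isActive f p.1 ∧ p.2 = leftBad (hand f p.1) then request (hand f p.1)
    else if h : ∃ a', isActive f a' ∧ request (hand f a') = f p then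
      f (h.choose, leftBad (hand f h.choose))
    else f p

/-- The game: alternate Shape Up and Ship Out rounds, starting with Shape Up. -/
noncomputable def gameSeq (f : A × Fin 4 → B × Fin 4) : ℕ → (A × Fin 4 → B × Fin 4)
  | 0 => f
  | (k + 1) => if k % 2 = 0 then gShapeUp (gameSeq f k) else gShipOut (gameSeq f k)

open Classical in
/-- The score of a hand: the number of spots `i` holding the card whose name is the
name of the hand and whose suit `3 - i` is the suit named by spot `i`. -/
noncomputable def score (h : Fin 4 → B × Fin 4) : ℕ :=
  (Finset.univ.filter (fun i => h i = ((h 0).1, 3 - i))).card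


section AuxLemmas

lemma mem_spadeSpots' {h : Fin 4 → B × Fin 4} {i : Fin 4} :
    i ∈ spadeSpots h ↔ (h i).2 = 3 := by simp [spadeSpots]

lemma mem_badSpades' {h : Fin 4 → B × Fin 4} {i : Fin 4} :
    i ∈ badSpades h ↔ i ≠ 0 ∧ (h i).2 = 3 := by simp [badSpades]

lemma leftBad_mem' {h : Fin 4 → B × Fin 4} (hb : (badSpades h).Nonempty) :
    leftBad h ∈ badSpades h := by
  rw [leftBad, dif_pos hb]; exact Finset.min'_mem _ _

lemma fin4_sub_ne {i : Fin 4} (hi : i ≠ 0) : (3 - i : Fin 4) ≠ 3 := by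
  revert hi; revert i; decide

lemma fin4_sub_inj {i j : Fin 4} (h : (3 - i : Fin 4) = 3 - j) : i = j := by
  revert h; revert i j; decide

lemma request_snd_ne {h : Fin 4 → B × Fin 4} (hb : (badSpades h).Nonempty) :
    (request h).2 ≠ 3 :=
  fin4_sub_ne (mem_badSpades'.mp (leftBad_mem' hb)).1

lemma shapeUp_of_named {h : Fin 4 → B × Fin 4} (hn : (h 0).2 = 3) : shapeUp h = h := by
  have h0 : (0 : Fin 4) ∈ spadeSpots h := mem_spadeSpots'.mpr hn
  have hne : (spadeSpots h).Nonempty := ⟨0, h0⟩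
  rw [shapeUp, dif_pos hne,
    show (spadeSpots h).min' hne = 0 from
      le_antisymm (Finset.min'_le _ _ h0) (Fin.zero_le _),
    Equiv.swap_self]
  rfl

lemma shapeUp_of_empty {h : Fin 4 → B × Fin 4} (hs : ¬(spadeSpots h).Nonempty) :
    shapeUp h = h := by rw [shapeUp, dif_neg hs]

lemma shapeUp_named {h : Fin 4 → B × Fin 4} (hs : (spadeSpots h).Nonempty) :
    ((shapeUp h) 0).2 = 3 := by
  rw [shapeUp, dif_pos hs]
  simp only [Function.comp_apply, Equiv.swap_apply_left]
  exact mem_spadeSpots'.mp (Finset.min'_mem _ hs)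

lemma hand_gShapeUp (F : A × Fin 4 → B × Fin 4) (a : A) :
    hand (gShapeUp F) a = shapeUp (hand F a) := rfl

lemma gShipOut_cases (F : A × Fin 4 → B × Fin 4) (p : A × Fin 4) :
    (isActive F p.1 ∧ p.2 = leftBad (hand F p.1) ∧
        gShipOut F p = request (hand F p.1)) ∨
    (¬(isActive F p.1 ∧ p.2 = leftBad (hand F p.1)) ∧
      ∃ a', isActive F a' ∧ request (hand F a') = F p ∧
        gShipOut F p = F (a', leftBad (hand F a'))) ∨
    (¬(isActive F p.1 ∧ p.2 = leftBad (hand F p.1)) ∧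
      (¬∃ a', isActive F a' ∧ request (hand F a') = F p) ∧ gShipOut F p = F p) := by
  unfold gShipOut
  split_ifs with h1 h2
  · exact Or.inl ⟨h1.1, h1.2, rfl⟩
  · exact Or.inr (Or.inl ⟨h1, h2.choose, h2.choose_spec.1, h2.choose_spec.2, rfl⟩)
  · exact Or.inr (Or.inr ⟨h1, h2, rfl⟩)

lemma gShipOut_eq_self (F : A × Fin 4 → B × Fin 4) (p : A × Fin 4)
    (h1 : ¬(isActive F p.1 ∧ p.2 = leftBad (hand F p.1)))
    (h2 : ¬∃ a', isActive F a' ∧ request (hand F a') = F p) :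
    gShipOut F p = F p := by
  unfold gShipOut; rw [if_neg h1, dif_neg h2]

lemma gShipOut_active_spot (F : A × Fin 4 → B × Fin 4) (p : A × Fin 4)
    (h1 : isActive F p.1 ∧ p.2 = leftBad (hand F p.1)) :
    gShipOut F p = request (hand F p.1) := by
  unfold gShipOut; rw [if_pos h1]

lemma gShipOut_spot0 (F : A × Fin 4 → B × Fin 4) (a : A) (hn : (F (a, 0)).2 = 3) :
    gShipOut F (a, 0) = F (a, 0) := by
  apply gShipOut_eq_self
  · rintro ⟨hact, h0⟩
    exact (mem_badSpades'.mp (leftBad_mem' hact.2)).1 h0.symm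
  · rintro ⟨a', ha', hreq⟩
    have h3 := request_snd_ne ha'.2
    rw [hreq] at h3; exact h3 hn

lemma gShipOut_matched (F : A × Fin 4 → B × Fin 4) (hF : Function.Injective F) (a : A)
    (hn : (F (a, 0)).2 = 3) (i : Fin 4)
    (hm : F (a, i) = ((F (a, 0)).1, 3 - i)) :
    gShipOut F (a, i) = F (a, i) := by
  apply gShipOut_eq_self
  · rintro ⟨hact, h0⟩
    have hlb := mem_badSpades'.mp (leftBad_mem' hact.2)
    simp only at h0
    rw [← h0] at hlb
    have h2 : (F (a, i)).2 = 3 := hlb.2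
    rw [hm] at h2
    exact fin4_sub_ne hlb.1 h2
  · rintro ⟨a', ha', hreq⟩
    rw [hm] at hreq
    unfold request at hreq
    have hfst := congrArg Prod.fst hreq
    have heq : F (a', 0) = F (a, 0) := Prod.ext hfst (ha'.1.trans hn.symm)
    have haa : a' = a := (Prod.ext_iff.mp (hF heq)).1
    subst haa
    have hlbi : leftBad (hand F a') = i := fin4_sub_inj (congrArg Prod.snd hreq)
    have hlb := mem_badSpades'.mp (leftBad_mem' ha'.2)
    rw [hlbi] at hlb
    have h2 : (F (a', i)).2 = 3 := hlb.2
    rw [hm] at h2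
    exact fin4_sub_ne hlb.1 h2

lemma score_le_four (h : Fin 4 → B × Fin 4) : score h ≤ 4 := by
  classical
  rw [score]
  exact le_trans (Finset.card_filter_le _ _) (by simp)

lemma one_le_score {h : Fin 4 → B × Fin 4} (hn : (h 0).2 = 3) : 1 ≤ score h := by
  classical
  rw [score, Finset.one_le_card]
  exact ⟨0, Finset.mem_filter.mpr ⟨Finset.mem_univ _,
    Prod.ext rfl (by simpa using hn)⟩⟩

lemma score_mono {h h' : Fin 4 → B × Fin 4} (h0 : h' 0 = h 0)
    (hkeep : ∀ i, h i = ((h 0).1, 3 - i) → h' i = h i) : score h ≤ score h' := by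
  classical
  rw [score, score]
  apply Finset.card_le_card
  intro i hi
  rw [Finset.mem_filter] at hi ⊢
  refine ⟨Finset.mem_univ _, ?_⟩
  rw [hkeep i hi.2, h0]
  exact hi.2

lemma score_lt {h h' : Fin 4 → B × Fin 4} (h0 : h' 0 = h 0)
    (hkeep : ∀ i, h i = ((h 0).1, 3 - i) → h' i = h i)
    (j : Fin 4) (hj : h' j = ((h 0).1, 3 - j)) (hjold : h j ≠ ((h 0).1, 3 - j)) :
    score h < score h' := by
  classical
  rw [score, score]
  apply Finset.card_lt_card
  constructor
  · intro i hi
    rw [Finset.mem_filter] at hi ⊢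
    refine ⟨Finset.mem_univ _, ?_⟩
    rw [hkeep i hi.2, h0]
    exact hi.2
  · intro hsub
    have := hsub (Finset.mem_filter.mpr ⟨Finset.mem_univ j, by rw [h0]; exact hj⟩)
    rw [Finset.mem_filter] at this
    exact hjold this.2


lemma score_le_shipOut (F : A × Fin 4 → B × Fin 4) (hF : Function.Injective F) (a : A)
    (hn : (F (a, 0)).2 = 3) :
    score (hand F a) ≤ score (hand (gShipOut F) a) :=
  score_mono (gShipOut_spot0 F a hn) (fun i hi => gShipOut_matched F hF a hn i hi)

lemma score_lt_shipOut (F : A × Fin 4 → B × Fin 4) (hF : Function.Injective F) (a : A)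
    (hact : isActive F a) :
    score (hand F a) < score (hand (gShipOut F) a) := by
  have hn := hact.1
  have hlb := mem_badSpades'.mp (leftBad_mem' hact.2)
  refine score_lt (gShipOut_spot0 F a hn)
    (fun i hi => gShipOut_matched F hF a hn i hi) (leftBad (hand F a)) ?_ ?_
  · show gShipOut F (a, leftBad (hand F a)) = _
    rw [gShipOut_active_spot F _ ⟨hact, rfl⟩]
    rfl
  · intro hcon
    have h2 := congrArg Prod.snd hcon
    simp only at h2
    rw [hlb.2] at h2
    exact fin4_sub_ne hlb.1 h2.symm

lemma gShipOut_changes (F : A × Fin 4 → B × Fin 4) (a : A) (hact : isActive F a) :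
    hand (gShipOut F) a ≠ hand F a := by
  intro hEq
  have h1 := congrFun hEq (leftBad (hand F a))
  have h2 : gShipOut F (a, leftBad (hand F a)) = request (hand F a) :=
    gShipOut_active_spot F _ ⟨hact, rfl⟩
  have hlb := mem_badSpades'.mp (leftBad_mem' hact.2)
  have h3 : (request (hand F a)).2 = 3 := by
    rw [← h2]; exact (congrArg Prod.snd h1).trans hlb.2
  exact request_snd_ne hact.2 h3

lemma gShipOut_passive (F : A × Fin 4 → B × Fin 4) (a : A)
    (hn : (F (a, 0)).2 = 3) (hna : ¬isActive F a)
    (hch : hand (gShipOut F) a ≠ hand F a) : isActive (gShipOut F) a := by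
  have h0 : gShipOut F (a, 0) = F (a, 0) := gShipOut_spot0 F a hn
  obtain ⟨i, hi⟩ : ∃ i, gShipOut F (a, i) ≠ F (a, i) := by
    by_contra hco; push_neg at hco; exact hch (funext hco)
  have hi0 : i ≠ 0 := by rintro rfl; exact hi h0
  rcases gShipOut_cases F (a, i) with ⟨hact, -⟩ | ⟨-, a', ha', -, hval⟩ | ⟨-, -, hval⟩
  · exact absurd hact hna
  · refine ⟨by rw [show gShipOut F (a, 0) = F (a, 0) from h0]; exact hn, ⟨i, ?_⟩⟩
    rw [mem_badSpades']
    refine ⟨hi0, ?_⟩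
    show (gShipOut F (a, i)).2 = 3
    rw [hval]
    exact (mem_badSpades'.mp (leftBad_mem' ha'.2)).2
  · exact absurd hval hi

lemma gShipOut_spawn (F : A × Fin 4 → B × Fin 4) (a : A) (hna : ¬isActive F a)
    (hch : hand (gShipOut F) a ≠ hand F a) :
    (spadeSpots (hand (gShipOut F) a)).Nonempty := by
  obtain ⟨i, hi⟩ : ∃ i, gShipOut F (a, i) ≠ F (a, i) := by
    by_contra hco; push_neg at hco; exact hch (funext hco)
  rcases gShipOut_cases F (a, i) with ⟨hact, -⟩ | ⟨-, a', ha', -, hval⟩ | ⟨-, -, hval⟩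
  · exact absurd hact hna
  · refine ⟨i, mem_spadeSpots'.mpr ?_⟩
    show (gShipOut F (a, i)).2 = 3
    rw [hval]
    exact (mem_badSpades'.mp (leftBad_mem' ha'.2)).2
  · exact absurd hval hi

lemma request_inj (F : A × Fin 4 → B × Fin 4) (hF : Function.Injective F) {a a' : A}
    (ha : isActive F a) (ha' : isActive F a')
    (h : request (hand F a) = request (hand F a')) : a = a' := by
  unfold request at h
  have hfst := congrArg Prod.fst h
  have heq : F (a, 0) = F (a', 0) := Prod.ext hfst (ha.1.trans ha'.1.symm)
  exact (Prod.ext_iff.mp (hF heq)).1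

lemma gShipOut_injective (F : A × Fin 4 → B × Fin 4) (hF : Function.Injective F) :
    Function.Injective (gShipOut F) := by
  intro p q hpq
  rcases gShipOut_cases F p with ⟨hap, hlp, hvp⟩ | ⟨-, c, hc, hcp, hvp⟩ | ⟨hn1p, hn2p, hvp⟩ <;>
    rcases gShipOut_cases F q with ⟨haq, hlq, hvq⟩ | ⟨-, d, hd, hdq, hvq⟩ | ⟨hn1q, hn2q, hvq⟩
  · -- B1 B1
    rw [hvp, hvq] at hpq
    have h1 : p.1 = q.1 := request_inj F hF hap haq hpq
    have h2 : p.2 = q.2 := by rw [hlp, hlq, h1]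
    exact Prod.ext h1 h2
  · -- B1 B2
    rw [hvp, hvq] at hpq
    have h3 : (request (hand F p.1)).2 ≠ 3 := request_snd_ne hap.2
    rw [hpq] at h3
    exact absurd (mem_badSpades'.mp (leftBad_mem' hd.2)).2 h3
  · -- B1 B3
    rw [hvp, hvq] at hpq
    exact absurd ⟨p.1, hap, hpq⟩ hn2q
  · -- B2 B1
    rw [hvp, hvq] at hpq
    have h3 : (request (hand F q.1)).2 ≠ 3 := request_snd_ne haq.2
    rw [← hpq] at h3
    exact absurd (mem_badSpades'.mp (leftBad_mem' hc.2)).2 h3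
  · -- B2 B2
    rw [hvp, hvq] at hpq
    have h1 := hF hpq
    have hcd : c = d := (Prod.ext_iff.mp h1).1
    apply hF
    rw [← hcp, ← hdq, hcd]
  · -- B2 B3
    rw [hvp, hvq] at hpq
    have h1 := hF hpq
    exfalso
    apply hn1q
    rw [← h1]
    exact ⟨hc, rfl⟩
  · -- B3 B1
    rw [hvp, hvq] at hpq
    exact absurd ⟨q.1, haq, hpq.symm⟩ hn2p
  · -- B3 B2
    rw [hvp, hvq] at hpq
    have h1 := hF hpq.symm
    exfalso
    apply hn1p
    rw [← h1]
    exact ⟨hd, rfl⟩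
  · rw [hvp, hvq] at hpq
    exact hF hpq

lemma shapeUp_apply (h : Fin 4 → B × Fin 4) (i : Fin 4) :
    shapeUp h i = h ((if hs : (spadeSpots h).Nonempty then
      Equiv.swap 0 ((spadeSpots h).min' hs) else Equiv.refl (Fin 4)) i) := by
  unfold shapeUp
  split_ifs with hs <;> rfl

lemma gShapeUp_injective (F : A × Fin 4 → B × Fin 4) (hF : Function.Injective F) :
    Function.Injective (gShapeUp F) := by
  intro p q hpq
  have key : ∀ r : A × Fin 4, gShapeUp F r =
      F (r.1, (if hs : (spadeSpots (hand F r.1)).Nonempty then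
        Equiv.swap 0 ((spadeSpots (hand F r.1)).min' hs) else Equiv.refl (Fin 4)) r.2) :=
    fun r => shapeUp_apply (hand F r.1) r.2
  rw [key p, key q] at hpq
  obtain ⟨a, i⟩ := p
  obtain ⟨a', j⟩ := q
  have h1 := hF hpq
  have h2 : a = a' := (Prod.ext_iff.mp h1).1
  subst h2
  have h3 := (Prod.ext_iff.mp h1).2
  simp only at h3
  exact Prod.ext rfl (Equiv.injective _ h3)

lemma gameSeq_succ (f : A × Fin 4 → B × Fin 4) (k : ℕ) :
    gameSeq f (k + 1) =
      if k % 2 = 0 then gShapeUp (gameSeq f k) else gShipOut (gameSeq f k) := rfl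

lemma gameSeq_injective (f : A × Fin 4 → B × Fin 4) (hf : Function.Injective f) (k : ℕ) :
    Function.Injective (gameSeq f k) := by
  induction k with
  | zero => exact hf
  | succ k ih =>
    rw [gameSeq_succ]
    split_ifs
    · exact gShapeUp_injective _ ih
    · exact gShipOut_injective _ ih

end AuxLemmas

/-- Each player's hand changes at most `8` times during the infinite alternating
game, so every hand eventually stabilizes. -/
theorem hand_changes_at_most_eight (f : A × Fin 4 → B × Fin 4)
    (hf : Function.Injective f) (a : A) :
    {k : ℕ | hand (gameSeq f k) a ≠ hand (gameSeq f (k + 1)) a}.Finite ∧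
      Nat.card {k : ℕ | hand (gameSeq f k) a ≠ hand (gameSeq f (k + 1)) a} ≤ 8 ∧
      ∃ K, ∀ k, K ≤ k → hand (gameSeq f k) a = hand (gameSeq f K) a := by
  classical
  set C : Set ℕ := {k : ℕ | hand (gameSeq f k) a ≠ hand (gameSeq f (k + 1)) a} with hCdef
  have hinj : ∀ k, Function.Injective (gameSeq f k) := gameSeq_injective f hf
  have hEvenHand : ∀ k, k % 2 = 0 →
      hand (gameSeq f (k + 1)) a = shapeUp (hand (gameSeq f k) a) := by
    intro k hk
    rw [gameSeq_succ, if_pos hk]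
    rfl
  have hOdd : ∀ k, k % 2 = 1 → gameSeq f (k + 1) = gShipOut (gameSeq f k) := by
    intro k hk
    rw [gameSeq_succ, if_neg (by omega)]
  have hNstep : ∀ k, (hand (gameSeq f k) a 0).2 = 3 →
      (hand (gameSeq f (k + 1)) a 0).2 = 3 := by
    intro k hk
    rcases Nat.mod_two_eq_zero_or_one k with h2 | h2
    · rw [hEvenHand k h2, shapeUp_of_named hk]; exact hk
    · rw [hOdd k h2]
      show (gShipOut (gameSeq f k) (a, 0)).2 = 3
      rw [gShipOut_spot0 _ a hk]
      exact hk
  have hNmono : ∀ k k', k ≤ k' → (hand (gameSeq f k) a 0).2 = 3 →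
      (hand (gameSeq f k') a 0).2 = 3 := by
    intro k k' hkk hk
    induction k', hkk using Nat.le_induction with
    | base => exact hk
    | succ n hn ih => exact hNstep n ih
  have hscrStep : ∀ k, (hand (gameSeq f k) a 0).2 = 3 →
      score (hand (gameSeq f k) a) ≤ score (hand (gameSeq f (k + 1)) a) := by
    intro k hk
    rcases Nat.mod_two_eq_zero_or_one k with h2 | h2
    · rw [hEvenHand k h2, shapeUp_of_named hk]
    · rw [hOdd k h2]
      exact score_le_shipOut _ (hinj k) a hk
  have hscrMono : ∀ k k', k ≤ k' → (hand (gameSeq f k) a 0).2 = 3 →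
      score (hand (gameSeq f k) a) ≤ score (hand (gameSeq f k') a) := by
    intro k k' hkk hk
    induction k', hkk using Nat.le_induction with
    | base => exact le_refl _
    | succ n hn ih => exact ih.trans (hscrStep n (hNmono k n hn hk))
  have hCe : ∀ k, k % 2 = 0 → k ∈ C →
      ¬(hand (gameSeq f k) a 0).2 = 3 ∧ (hand (gameSeq f (k + 1)) a 0).2 = 3 := by
    intro k hk hkC
    have hh := hEvenHand k hk
    constructor
    · intro hN
      exact hkC (hh.trans (shapeUp_of_named hN)).symm
    · by_cases hs : (spadeSpots (hand (gameSeq f k) a)).Nonempty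
      · rw [hh]; exact shapeUp_named hs
      · exact absurd (hh.trans (shapeUp_of_empty hs)).symm hkC
  have hCoUnnamed : ∀ k, k % 2 = 1 → ¬(hand (gameSeq f k) a 0).2 = 3 → k ∈ C →
      (hand (gameSeq f (k + 2)) a 0).2 = 3 := by
    intro k hk hN hkC
    have hna : ¬isActive (gameSeq f k) a := fun hact => hN hact.1
    have hch : hand (gShipOut (gameSeq f k)) a ≠ hand (gameSeq f k) a := by
      rw [← hOdd k hk]; exact Ne.symm hkC
    have hsp : (spadeSpots (hand (gameSeq f (k + 1)) a)).Nonempty := by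
      rw [hOdd k hk]; exact gShipOut_spawn _ a hna hch
    have : (k : ℕ) + 2 = (k + 1) + 1 := by omega
    rw [this, hEvenHand (k + 1) (by omega)]
    exact shapeUp_named hsp
  have hActStrict : ∀ k, k % 2 = 1 → isActive (gameSeq f k) a →
      score (hand (gameSeq f k) a) < score (hand (gameSeq f (k + 1)) a) := by
    intro k hk hact
    rw [hOdd k hk]
    exact score_lt_shipOut _ (hinj k) a hact
  have hPass : ∀ k, k % 2 = 1 → (hand (gameSeq f k) a 0).2 = 3 →
      ¬isActive (gameSeq f k) a → k ∈ C → isActive (gameSeq f (k + 2)) a := by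
    intro k hk hN hna hkC
    have hch : hand (gShipOut (gameSeq f k)) a ≠ hand (gameSeq f k) a := by
      rw [← hOdd k hk]; exact Ne.symm hkC
    have h1 : isActive (gameSeq f (k + 1)) a := by
      rw [hOdd k hk]
      exact gShipOut_passive _ a hN hna hch
    have hN1 : (hand (gameSeq f (k + 1)) a 0).2 = 3 := h1.1
    have hh : hand (gameSeq f (k + 2)) a = hand (gameSeq f (k + 1)) a := by
      rw [show (k : ℕ) + 2 = (k + 1) + 1 from rfl, hEvenHand (k + 1) (by omega),
        shapeUp_of_named hN1]
    constructor
    · show (hand (gameSeq f (k + 2)) a 0).2 = 3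
      rw [hh]; exact hN1
    · rw [show hand (gameSeq f (k + 2)) a = hand (gameSeq f (k + 1)) a from hh]
      exact h1.2
  -- the tagging function
  set ψ : ℕ → ℕ := fun k =>
    if k % 2 = 0 then 0
    else if (hand (gameSeq f k) a 0).2 = 3 then
      (if isActive (gameSeq f k) a then 1 + score (hand (gameSeq f k) a)
       else 4 + score (hand (gameSeq f (k + 2)) a))
    else 1 with hψdef
  have hψ0 : ∀ k, k % 2 = 0 → ψ k = 0 := fun k hk => if_pos hk
  have hψ1 : ∀ k, k % 2 = 1 → ¬(hand (gameSeq f k) a 0).2 = 3 → ψ k = 1 := by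
    intro k hk hN
    rw [hψdef]
    simp only [if_neg (show ¬ k % 2 = 0 by omega), if_neg hN]
  have hψA : ∀ k, k % 2 = 1 → (hand (gameSeq f k) a 0).2 = 3 →
      isActive (gameSeq f k) a → ψ k = 1 + score (hand (gameSeq f k) a) := by
    intro k hk hN hact
    rw [hψdef]
    simp only [if_neg (show ¬ k % 2 = 0 by omega), if_pos hN, if_pos hact]
  have hψP : ∀ k, k % 2 = 1 → (hand (gameSeq f k) a 0).2 = 3 →
      ¬isActive (gameSeq f k) a → ψ k = 4 + score (hand (gameSeq f (k + 2)) a) := by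
    intro k hk hN hact
    rw [hψdef]
    simp only [if_neg (show ¬ k % 2 = 0 by omega), if_pos hN, if_neg hact]
  -- score bounds on change steps
  have hscrA : ∀ k, k % 2 = 1 → isActive (gameSeq f k) a →
      score (hand (gameSeq f k) a) ≤ 3 := by
    intro k hk hact
    have h1 := hActStrict k hk hact
    have h2 := score_le_four (hand (gameSeq f (k + 1)) a)
    omega
  have hψpos : ∀ k, k % 2 = 1 → 1 ≤ ψ k := by
    intro k hk
    by_cases hN : (hand (gameSeq f k) a 0).2 = 3
    · by_cases hact : isActive (gameSeq f k) a
      · rw [hψA k hk hN hact]; omega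
      · rw [hψP k hk hN hact]; omega
    · rw [hψ1 k hk hN]
  have hbound : ∀ k ∈ C, ψ k < 8 := by
    intro k hk
    rcases Nat.mod_two_eq_zero_or_one k with h2 | h2
    · rw [hψ0 k h2]; omega
    · by_cases hN : (hand (gameSeq f k) a 0).2 = 3
      · by_cases hact : isActive (gameSeq f k) a
        · rw [hψA k h2 hN hact]
          have := hscrA k h2 hact
          omega
        · rw [hψP k h2 hN hact]
          have h3 := hPass k h2 hN hact hk
          have h4 := hscrA (k + 2) (by omega) h3
          omega
      · rw [hψ1 k h2 hN]; omega
  -- main injectivity of ψ on C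
  have key : ∀ k k', k ∈ C → k' ∈ C → k < k' → ψ k ≠ ψ k' := by
    intro k k' hk hk' hlt
    rcases Nat.mod_two_eq_zero_or_one k with h2 | h2 <;>
      rcases Nat.mod_two_eq_zero_or_one k' with h2' | h2'
    · -- both even : impossible
      exfalso
      have hA := hCe k h2 hk
      have hB := hCe k' h2' hk'
      exact hB.1 (hNmono (k + 1) k' (by omega) hA.2)
    · rw [hψ0 k h2]
      have := hψpos k' h2'
      omega
    · rw [hψ0 k' h2']
      have := hψpos k h2
      omega
    · -- both odd
      by_cases hN : (hand (gameSeq f k) a 0).2 = 3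
      · have hN' : (hand (gameSeq f k') a 0).2 = 3 := hNmono k k' (le_of_lt hlt) hN
        by_cases hact : isActive (gameSeq f k) a <;>
          by_cases hact' : isActive (gameSeq f k') a
        · -- both active
          rw [hψA k h2 hN hact, hψA k' h2' hN' hact']
          have h3 := hActStrict k h2 hact
          have h4 : score (hand (gameSeq f (k + 1)) a) ≤ score (hand (gameSeq f k') a) :=
            hscrMono (k + 1) k' (by omega) (hNstep k hN)
          omega
        · -- active / passive
          rw [hψA k h2 hN hact, hψP k' h2' hN' hact']
          have h3 := hscrA k h2 hact
          have h4 : 1 ≤ score (hand (gameSeq f (k' + 2)) a) :=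
            one_le_score (hNmono k (k' + 2) (by omega) hN)
          omega
        · -- passive / active
          rw [hψP k h2 hN hact, hψA k' h2' hN' hact']
          have h3 := hscrA k' h2' hact'
          have h4 : 1 ≤ score (hand (gameSeq f (k + 2)) a) :=
            one_le_score (hNmono k (k + 2) (by omega) hN)
          omega
        · -- both passive
          rw [hψP k h2 hN hact, hψP k' h2' hN' hact']
          have h3 := hPass k h2 hN hact hk
          rcases eq_or_lt_of_le (show k + 2 ≤ k' by omega) with he | hlt2
          · exfalso
            rw [he] at h3
            exact hact' h3
          · have h4 := hActStrict (k + 2) (by omega) h3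
            have h5 : score (hand (gameSeq f (k + 2 + 1)) a) ≤
                score (hand (gameSeq f (k' + 2)) a) :=
              hscrMono (k + 2 + 1) (k' + 2) (by omega)
                (hNmono k (k + 2 + 1) (by omega) hN)
            omega
      · -- ¬N k
        have hNk2 := hCoUnnamed k h2 hN hk
        by_cases hN' : (hand (gameSeq f k') a 0).2 = 3
        · rw [hψ1 k h2 hN]
          by_cases hact' : isActive (gameSeq f k') a
          · rw [hψA k' h2' hN' hact']
            have := one_le_score hN'
            omega
          · rw [hψP k' h2' hN' hact']
            omega
        · exfalso
          exact hN' (hNmono (k + 2) k' (by omega) hNk2)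
  have hinjOn : Set.InjOn ψ C := by
    intro k hk k' hk' he
    rcases lt_trichotomy k k' with h | h | h
    · exact absurd he (key k k' hk hk' h)
    · exact h
    · exact absurd he.symm (key k' k hk' hk h)
  have hCfin : C.Finite := by
    apply Set.Finite.of_finite_image _ hinjOn
    apply Set.Finite.subset (Set.finite_Iio 8)
    rintro _ ⟨k, hk, rfl⟩
    exact hbound k hk
  refine ⟨hCfin, ?_, ?_⟩
  · rw [Nat.card_coe_set_eq]
    calc C.ncard ≤ (↑(Finset.range 8) : Set ℕ).ncard := by
          apply Set.ncard_le_ncard_of_injOn ψ _ hinjOn (Finset.finite_toSet _)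
          intro x hx
          simp only [Finset.coe_range, Set.mem_Iio]
          exact hbound x hx
      _ = 8 := by rw [Set.ncard_coe_finset, Finset.card_range]
  · obtain ⟨n, hn⟩ := hCfin.bddAbove
    refine ⟨n + 1, ?_⟩
    intro k hk
    induction k, hk using Nat.le_induction with
    | base => rfl
    | succ m hm ih =>
      have hmC : m ∉ C := by
        intro hmem
        have := hn hmem
        omega
      have : hand (gameSeq f m) a = hand (gameSeq f (m + 1)) a := by
        by_contra hne
        exact hmC hne
      rw [← this, ih]
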